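/- Let f_k(μ) = e^{−μ}(1 + μ + … + μ^k/k!) and T^{(k)} = f_k(μ) − P(X=0)(1 + μ + … + μ^k/k!). If D(t,μ) = Ψ_X'(t) − μΨ_X(t) does not change sign on [0,1], then (1 + μ + … + μ^k/k!)^{−1} |T^{(k)}| ≤ ∫_0^1 |D(t,μ)| dt ≤ e^{μ} |T^{(k)}| for every natural number k. -/

import Mathlib

/-!
Writing `Ψ` for the generating function of `p`, the factor `e^{-μt}` integrates
`D = Ψ' - μΨ`: `(Ψ(t) e^{-μt})' = D(t) e^{-μt}`. Since `D` keeps its sign on `[0, 1]`,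
`∫₀¹ |D(t)| e^{-μt} dt = |e^{-μ} Ψ(1) - Ψ(0)| = |e^{-μ} - P(X = 0)|`, and `|T⁽ᵏ⁾|` is this
quantity times `∑_{j ≤ k} μ^j/j! ≥ 1`. Finally `e^{-μ} ≤ e^{-μt} ≤ 1` on `[0, 1]` compares
`∫₀¹ |D| e^{-μt}` with `∫₀¹ |D|` in both directions.
-/

open Real Set MeasureTheory intervalIntegral

noncomputable def pgf (p : ℕ → ℝ) (s : ℝ) : ℝ := ∑' j, p j * s ^ j

section GeneratingFunction

variable {p : ℕ → ℝ}

theorem pgf_zero (p : ℕ → ℝ) : pgf p 0 = p 0 := by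
  rw [pgf, tsum_eq_single 0 fun j hj => by simp [hj]]
  simp

theorem pgf_one (p : ℕ → ℝ) : pgf p 1 = ∑' j, p j := by
  simp [pgf]

theorem pgf_eq_ofScalarsSum (p : ℕ → ℝ) : pgf p = FormalMultilinearSeries.ofScalarsSum p := by
  ext s
  simp [pgf, FormalMultilinearSeries.ofScalars_sum_eq]

theorem one_le_ofScalars_radius_of_summable_norm (hp : Summable fun j => ‖p j‖) :
    1 ≤ (FormalMultilinearSeries.ofScalars ℝ p).radius := by
  simpa using (FormalMultilinearSeries.ofScalars ℝ p).le_radius_of_summable_norm (r := 1)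
    (by simpa [FormalMultilinearSeries.ofScalars_norm] using hp)

theorem differentiableOn_pgf (hp : Summable fun j => ‖p j‖) :
    DifferentiableOn ℝ (pgf p) (Ioo (-1) 1) := by
  have hradius := one_le_ofScalars_radius_of_summable_norm hp
  rw [pgf_eq_ofScalarsSum]
  refine ((FormalMultilinearSeries.ofScalars ℝ p).hasFPowerSeriesOnBall
    (zero_lt_one.trans_le hradius)).differentiableOn.mono fun x hx => ?_
  refine Metric.eball_subset_eball hradius ?_
  rw [← ENNReal.coe_one, Metric.eball_coe, Real.ball_eq_Ioo]
  simpa using hx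

theorem continuousOn_pgf (hp : Summable fun j => ‖p j‖) :
    ContinuousOn (pgf p) (Icc (-1) 1) :=
  continuousOn_tsum (fun j => (continuous_const.mul (continuous_pow j)).continuousOn) hp
    fun j x hx => by
      rw [norm_mul, norm_pow]
      exact mul_le_of_le_one_right (norm_nonneg _) (pow_le_one₀ (norm_nonneg _) (abs_le.2 hx))

end GeneratingFunction

section SignedDerivative

variable {F f : ℝ → ℝ} {a b : ℝ}

theorem intervalIntegrable_and_integral_abs_eq_of_nonneg (hab : a ≤ b)
    (hcont : ContinuousOn F (Icc a b)) (hderiv : ∀ x ∈ Ioo a b, HasDerivAt F (f x) x)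
    (hf : ∀ x ∈ Ioo a b, 0 ≤ f x) :
    IntervalIntegrable f volume a b ∧ ∫ x in a..b, |f x| = |F b - F a| := by
  have hint : IntervalIntegrable f volume a b :=
    intervalIntegrable_deriv_of_nonneg (by simpa [hab] using hcont) (by simpa [hab] using hderiv)
      (by simpa [hab] using hf)
  have habs : ∫ x in a..b, |f x| = ∫ x in a..b, f x := by
    simp only [integral_of_le hab, integral_Ioc_eq_integral_Ioo]
    exact setIntegral_congr_fun measurableSet_Ioo fun x hx => abs_of_nonneg (hf x hx)
  have hftc : ∫ x in a..b, f x = F b - F a :=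
    integral_eq_sub_of_hasDerivAt_of_le hab hcont hderiv hint
  have hnonneg : 0 ≤ F b - F a := hftc ▸ habs ▸ integral_nonneg hab fun x _ => abs_nonneg (f x)
  exact ⟨hint, by rw [habs, hftc, abs_of_nonneg hnonneg]⟩

theorem intervalIntegrable_and_integral_abs_eq (hab : a ≤ b)
    (hcont : ContinuousOn F (Icc a b)) (hderiv : ∀ x ∈ Ioo a b, HasDerivAt F (f x) x)
    (hf : (∀ x ∈ Ioo a b, 0 ≤ f x) ∨ (∀ x ∈ Ioo a b, f x ≤ 0)) :
    IntervalIntegrable f volume a b ∧ ∫ x in a..b, |f x| = |F b - F a| := by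
  rcases hf with hf | hf
  · exact intervalIntegrable_and_integral_abs_eq_of_nonneg hab hcont hderiv hf
  · obtain ⟨hint, heq⟩ := intervalIntegrable_and_integral_abs_eq_of_nonneg (F := -F) hab hcont.neg
      (fun x hx => (hderiv x hx).neg) fun x hx => neg_nonneg.2 (hf x hx)
    refine ⟨by simpa only [Pi.neg_def, neg_neg] using hint.neg, ?_⟩
    simpa only [Pi.neg_apply, abs_neg, neg_sub_neg, abs_sub_comm (F a)] using heq

end SignedDerivative

section IntegratingFactor

variable {Ψ : ℝ → ℝ} {Ψ' μ t : ℝ}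

theorem HasDerivAt.mul_exp_neg_mul (h : HasDerivAt Ψ Ψ' t) :
    HasDerivAt (fun s => Ψ s * Real.exp (-μ * s)) ((Ψ' - μ * Ψ t) * Real.exp (-μ * t)) t := by
  have he : HasDerivAt (fun s => Real.exp (-μ * s)) (Real.exp (-μ * t) * -μ) t := by
    simpa using ((hasDerivAt_id t).const_mul (-μ)).exp
  exact (h.fun_mul he).congr_deriv (by ring)

theorem intervalIntegrable_and_integral_abs_mul_exp_eq (hcont : ContinuousOn Ψ (Icc 0 1))
    (hdiff : DifferentiableOn ℝ Ψ (Ioo 0 1))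
    (hsign : (∀ t ∈ Ioo (0 : ℝ) 1, 0 ≤ deriv Ψ t - μ * Ψ t) ∨
      (∀ t ∈ Ioo (0 : ℝ) 1, deriv Ψ t - μ * Ψ t ≤ 0)) :
    IntervalIntegrable (fun t => deriv Ψ t - μ * Ψ t) volume 0 1 ∧
      ∫ t in (0 : ℝ)..1, |deriv Ψ t - μ * Ψ t| * exp (-μ * t) = |Ψ 1 * exp (-μ) - Ψ 0| := by
  have hexp : Continuous fun t => exp (-μ * t) := by fun_prop
  obtain ⟨hint, heq⟩ := intervalIntegrable_and_integral_abs_eq zero_le_one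
    (hcont.mul hexp.continuousOn)
    (fun t ht => HasDerivAt.mul_exp_neg_mul
      ((hdiff t ht).differentiableAt (isOpen_Ioo.mem_nhds ht)).hasDerivAt)
    (hsign.imp (fun h t ht => mul_nonneg (h t ht) (exp_pos _).le)
      fun h t ht => mul_nonpos_of_nonpos_of_nonneg (h t ht) (exp_pos _).le)
  refine ⟨?_, by simpa [abs_mul] using heq⟩
  have hexp' : ContinuousOn (fun t => exp (μ * t)) (uIcc 0 1) := by fun_prop
  refine (hint.mul_continuousOn hexp').congr fun t _ => ?_
  simp [mul_assoc, ← exp_add]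

end IntegratingFactor

section ExpWeight

variable {h : ℝ → ℝ} {μ : ℝ}

theorem integral_mul_exp_neg_mul_le (hμ : 0 ≤ μ) (hh : IntervalIntegrable h volume 0 1)
    (h0 : ∀ t ∈ Icc (0 : ℝ) 1, 0 ≤ h t) : ∫ t in (0 : ℝ)..1, h t * exp (-μ * t) ≤ ∫ t in (0 : ℝ)..1, h t := by
  refine integral_mono_on zero_le_one (hh.mul_continuousOn (by fun_prop)) hh fun t ht => ?_
  exact mul_le_of_le_one_right (h0 t ht) (exp_le_one_iff.2 (by nlinarith [ht.1]))

theorem integral_le_exp_mul_integral_mul_exp_neg_mul (hμ : 0 ≤ μ)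
    (hh : IntervalIntegrable h volume 0 1) (h0 : ∀ t ∈ Icc (0 : ℝ) 1, 0 ≤ h t) :
    ∫ t in (0 : ℝ)..1, h t ≤ exp μ * ∫ t in (0 : ℝ)..1, h t * exp (-μ * t) := by
  rw [← intervalIntegral.integral_const_mul]
  refine integral_mono_on zero_le_one hh ((hh.mul_continuousOn (by fun_prop)).const_mul _)
    fun t ht => ?_
  have hweight : 1 ≤ exp μ * exp (-μ * t) := by
    rw [← exp_add]
    exact one_le_exp (by nlinarith [ht.2])
  calc h t = h t * 1 := (mul_one _).symm
    _ ≤ h t * (exp μ * exp (-μ * t)) := mul_le_mul_of_nonneg_left hweight (h0 t ht)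
    _ = exp μ * (h t * exp (-μ * t)) := by ring

end ExpWeight

theorem one_le_sum_range_pow_div_factorial {μ : ℝ} (hμ : 0 ≤ μ) (k : ℕ) :
    1 ≤ ∑ j ∈ Finset.range (k + 1), μ ^ j / j.factorial := by
  simpa using Finset.single_le_sum (f := fun j : ℕ => μ ^ j / j.factorial)
    (fun j _ => by positivity) (Finset.mem_range.2 k.succ_pos)

theorem T_k_integral_bounds_general (p : ℕ → ℝ)
    (hsum : ∑' j, p j = 1)
    (μ : ℝ) (hμ : 0 < μ)
    (D : ℝ → ℝ)
    (hD : D = fun t => deriv (fun s : ℝ => ∑' j : ℕ, p j * s ^ j) t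
      - μ * ∑' j : ℕ, p j * t ^ j)
    (hsign : (∀ t ∈ Set.Icc (0 : ℝ) 1, 0 ≤ D t) ∨ (∀ t ∈ Set.Icc (0 : ℝ) 1, D t ≤ 0))
    (k : ℕ)
    (T : ℝ)
    (hT : T = Real.exp (-μ) * (∑ j ∈ Finset.range (k + 1), μ ^ j / (Nat.factorial j))
      - p 0 * ∑ j ∈ Finset.range (k + 1), μ ^ j / (Nat.factorial j)) :
    (∑ j ∈ Finset.range (k + 1), μ ^ j / (Nat.factorial j))⁻¹ * |T|
        ≤ ∫ t in (0 : ℝ)..1, |D t| ∧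
      ∫ t in (0 : ℝ)..1, |D t| ≤ Real.exp μ * |T| := by
  subst hD hT
  set S := ∑ j ∈ Finset.range (k + 1), μ ^ j / (Nat.factorial j)
  have hS : 1 ≤ S := one_le_sum_range_pow_div_factorial hμ.le k
  have hsummable : Summable fun j => ‖p j‖ := by
    refine Summable.norm ?_
    by_contra h
    simp [tsum_eq_zero_of_not_summable h] at hsum
  obtain ⟨hint, hkey⟩ := intervalIntegrable_and_integral_abs_mul_exp_eq (μ := μ)
    ((continuousOn_pgf hsummable).mono (Icc_subset_Icc_left (by norm_num)))
    ((differentiableOn_pgf hsummable).mono (Ioo_subset_Ioo_left (by norm_num)))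
    (hsign.imp (fun h t ht => h t (Ioo_subset_Icc_self ht))
      fun h t ht => h t (Ioo_subset_Icc_self ht))
  rw [pgf_one, hsum, pgf_zero, one_mul] at hkey
  have hlow := integral_mul_exp_neg_mul_le hμ.le hint.abs fun t _ => abs_nonneg _
  have hup := integral_le_exp_mul_integral_mul_exp_neg_mul hμ.le hint.abs fun t _ => abs_nonneg _
  rw [hkey] at hlow hup
  have hT : |exp (-μ) * S - p 0 * S| = S * |exp (-μ) - p 0| := by
    rw [← sub_mul, abs_mul, abs_of_pos (a := S) (by linarith), mul_comm]
  rw [hT, inv_mul_cancel_left₀ (by positivity)]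
  refine ⟨hlow, hup.trans ?_⟩
  gcongr
  exact le_mul_of_one_le_left (abs_nonneg _) hS

/-- Bounds of Proposition 1: for every `k`,
`(∑_{j≤k} μ^j/j!)⁻¹ |T⁽ᵏ⁾| ≤ ∫_0^1 |D(t,μ)| dt ≤ e^μ |T⁽ᵏ⁾|`. -/
theorem T_k_integral_bounds (p : ℕ → ℝ) (hp : ∀ j, 0 ≤ p j)
    (hsum : ∑' j, p j = 1) (hmean : Summable (fun j : ℕ => (j : ℝ) * p j))
    (μ : ℝ) (hμ : 0 < μ)
    (D : ℝ → ℝ)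
    (hD : D = fun t => deriv (fun s : ℝ => ∑' j : ℕ, p j * s ^ j) t
      - μ * ∑' j : ℕ, p j * t ^ j)
    (hsign : (∀ t ∈ Set.Icc (0 : ℝ) 1, 0 ≤ D t) ∨ (∀ t ∈ Set.Icc (0 : ℝ) 1, D t ≤ 0))
    (k : ℕ)
    (T : ℝ)
    (hT : T = Real.exp (-μ) * (∑ j ∈ Finset.range (k + 1), μ ^ j / (Nat.factorial j))
      - p 0 * ∑ j ∈ Finset.range (k + 1), μ ^ j / (Nat.factorial j)) :
    (∑ j ∈ Finset.range (k + 1), μ ^ j / (Nat.factorial j))⁻¹ * |T|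
        ≤ ∫ t in (0 : ℝ)..1, |D t| ∧
      ∫ t in (0 : ℝ)..1, |D t| ≤ Real.exp μ * |T| :=
  T_k_integral_bounds_general p hsum μ hμ D hD hsign k T hT
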